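/- arXiv:1511.05219 — 4 statements merged into one kernel-verified Lean document; each statement's English description precedes it below -/
import Mathlib

section
/- Let P and Q be probability measures on a common measurable space with P absolutely continuous with respect to Q. Then the KL divergence satisfies the variational formula D(P ‖ Q) = sup over random variables X of (E_P[X] − log E_Q[e^X]), where the supremum is over all X such that E_P[X] is well-defined and e^X is Q-integrable. -/
open MeasureTheory ProbabilityTheory Real

/-- Kullback–Leibler divergence `∫ log (dP/dQ) dP` (real-valued). -/
noncomputable def klDivReal {α : Type*} [MeasurableSpace α] (P Q : Measure α) : ℝ :=
  ∫ x, llr P Q x ∂P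

/-- Mutual information `I(X; Y)`: KL divergence between the joint law and the
product of the marginals. -/
noncomputable def mutualInfo {Ω α β : Type*} [MeasurableSpace Ω] [MeasurableSpace α]
    [MeasurableSpace β] (μ : Measure Ω) (X : Ω → α) (Y : Ω → β) : ℝ :=
  klDivReal (μ.map fun ω => (X ω, Y ω)) ((μ.map X).prod (μ.map Y))

/-- `X` is `σ`-sub-Gaussian (around zero): `E[exp (λ X)] ≤ exp (λ² σ² / 2)` for all `λ`. -/
def IsSubGaussian {Ω : Type*} [MeasurableSpace Ω] (μ : Measure Ω) (X : Ω → ℝ) (σ : ℝ) : Prop :=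
  ∀ l : ℝ, ∫ ω, Real.exp (l * X ω) ∂μ ≤ Real.exp (l ^ 2 * σ ^ 2 / 2)

/-!
Gibbs' inequality `0 ≤ D(P ‖ Q_f)` for the tilted measure `dQ_f = e^f dQ / ∫ e^f dQ` is exactly
`∫ f dP - log ∫ e^f dQ ≤ D(P ‖ Q)`. Conversely the truncations `min (log dP/dQ) n` (sent to
`-n` where `dP/dQ = 0`) have `∫ e^f dQ ≤ 1 + e^{-n}`, so their objective is at least
`∫ min (log dP/dQ) n dP - e^{-n}`. By monotone convergence this tends to `D(P ‖ Q)` when the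
log-likelihood ratio is integrable, and is unbounded otherwise, where both sides are `0` by the
junk-value conventions of `∫` and `⨆`.
-/

open Filter Topology

lemma tendsto_min_natCast_atTop (a : ℝ) : Tendsto (fun n : ℕ ↦ min a n) atTop (𝓝 a) :=
  tendsto_const_nhds.congr' <| (eventually_ge_atTop ⌈a⌉₊).mono fun _ hn ↦
    (min_eq_left ((Nat.le_ceil a).trans (Nat.cast_le.2 hn))).symm

lemma monotone_min_natCast (a : ℝ) : Monotone fun n : ℕ ↦ min a n :=
  fun _ _ h ↦ min_le_min_left a (Nat.cast_le.2 h)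

namespace MeasureTheory

variable {α : Type*} [MeasurableSpace α]

lemma integrable_of_monotone_of_bddAbove_integral {μ : Measure α} {f : ℕ → α → ℝ} {F : α → ℝ}
    (hf : ∀ n, Integrable (f n) μ) (hF : AEStronglyMeasurable F μ)
    (h_mono : ∀ᵐ x ∂μ, Monotone fun n ↦ f n x)
    (h_tendsto : ∀ᵐ x ∂μ, Tendsto (fun n ↦ f n x) atTop (𝓝 (F x)))
    (h_bdd : BddAbove (Set.range fun n ↦ ∫ x, f n x ∂μ)) :
    Integrable F μ := by
  obtain ⟨C, hC⟩ := h_bdd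
  have h_nonneg : 0 ≤ᵐ[μ] fun x ↦ F x - f 0 x := by
    filter_upwards [h_mono, h_tendsto] with x hx_mono hx_tendsto
    exact sub_nonneg.2 (ge_of_tendsto' hx_tendsto fun n ↦ hx_mono n.zero_le)
  have h_lim : Tendsto (fun n ↦ ∫⁻ x, ENNReal.ofReal (f n x - f 0 x) ∂μ) atTop
      (𝓝 (∫⁻ x, ENNReal.ofReal (F x - f 0 x) ∂μ)) := by
    refine lintegral_tendsto_of_tendsto_of_monotone
      (fun n ↦ ((hf n).sub (hf 0)).aemeasurable.ennreal_ofReal) ?_ ?_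
    · filter_upwards [h_mono] with x hx m n hmn
      exact ENNReal.ofReal_le_ofReal (sub_le_sub_right (hx hmn) _)
    · filter_upwards [h_tendsto] with x hx
      exact ENNReal.tendsto_ofReal (hx.sub_const _)
  have h_le : ∫⁻ x, ENNReal.ofReal (F x - f 0 x) ∂μ ≤ ENNReal.ofReal (C - ∫ x, f 0 x ∂μ) := by
    refine le_of_tendsto' h_lim fun n ↦ ?_
    have h_nonneg_n : 0 ≤ᵐ[μ] fun x ↦ f n x - f 0 x := by
      filter_upwards [h_mono] with x hx using sub_nonneg.2 (hx n.zero_le)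
    rw [← ofReal_integral_eq_lintegral_ofReal (f := fun x ↦ f n x - f 0 x) ((hf n).sub (hf 0))
      h_nonneg_n, integral_sub (hf n) (hf 0)]
    exact ENNReal.ofReal_le_ofReal (sub_le_sub_right (hC ⟨n, rfl⟩) _)
  have h_diff : Integrable (fun x ↦ F x - f 0 x) μ :=
    ⟨hF.sub (hf 0).1,
      (hasFiniteIntegral_iff_ofReal h_nonneg).2 (h_le.trans_lt ENNReal.ofReal_lt_top)⟩
  exact (h_diff.add (hf 0)).congr (.of_forall fun x ↦ sub_add_cancel (F x) (f 0 x))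

variable {P Q : Measure α}

lemma neg_toReal_rnDeriv_le_llr [SigmaFinite P] [SigmaFinite Q] (hPQ : P ≪ Q) :
    ∀ᵐ x ∂P, -(Q.rnDeriv P x).toReal ≤ llr P Q x := by
  filter_upwards [exp_neg_llr hPQ] with x hx
  linarith [hx ▸ add_one_le_exp (-llr P Q x)]

lemma integrable_min_llr [IsFiniteMeasure P] [IsFiniteMeasure Q] (hPQ : P ≪ Q) (c : ℝ) :
    Integrable (fun x ↦ min (llr P Q x) c) P := by
  refine Integrable.mono' ((Measure.integrable_toReal_rnDeriv (μ := Q)).add (integrable_const |c|))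
    ((measurable_llr P Q).min measurable_const).aestronglyMeasurable ?_
  filter_upwards [neg_toReal_rnDeriv_le_llr hPQ] with x hx
  rw [norm_eq_abs, abs_le, Pi.add_apply]
  have ht : 0 ≤ (Q.rnDeriv P x).toReal := ENNReal.toReal_nonneg
  refine ⟨le_min (by linarith [abs_nonneg c]) (by linarith [neg_abs_le c]), ?_⟩
  linarith [min_le_right (llr P Q x) c, le_abs_self c]

lemma integral_sub_log_integral_exp_le_integral_llr [IsProbabilityMeasure P] [SigmaFinite Q]
    (hPQ : P ≪ Q) (h_llr : Integrable (llr P Q) P) {f : α → ℝ} (hfP : Integrable f P)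
    (hfQ : Integrable (fun x ↦ exp (f x)) Q) :
    ∫ x, f x ∂P - log (∫ x, exp (f x) ∂Q) ≤ ∫ x, llr P Q x ∂P := by
  have : NeZero Q := ⟨fun hQ ↦
    IsProbabilityMeasure.ne_zero P (Measure.absolutelyContinuous_zero_iff.mp (hQ ▸ hPQ))⟩
  have := isProbabilityMeasure_tilted hfQ
  have h_gibbs := InformationTheory.integral_llr_add_sub_measure_univ_nonneg
    (hPQ.trans (absolutelyContinuous_tilted hfQ)) (integrable_llr_tilted_right hPQ hfP h_llr hfQ)
  rw [integral_llr_tilted_right hPQ hfP hfQ h_llr] at h_gibbs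
  simp only [probReal_univ, add_sub_cancel_right] at h_gibbs
  linarith

/-- On `{dP/dQ = 0}`, a `P`-null set that may carry `Q`-mass, `llr` has the junk value `0`; the
value `-c` there keeps `∫ exp (truncatedLlr P Q c) ∂Q` close to `1`. -/
noncomputable def truncatedLlr (P Q : Measure α) (c : ℝ) (x : α) : ℝ :=
  if P.rnDeriv Q x = 0 then -c else min (llr P Q x) c

lemma measurable_truncatedLlr (P Q : Measure α) (c : ℝ) : Measurable (truncatedLlr P Q c) :=
  Measurable.ite (Measure.measurable_rnDeriv P Q (measurableSet_singleton 0)) measurable_const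
    ((measurable_llr P Q).min measurable_const)

lemma truncatedLlr_ae_eq [SigmaFinite P] [SigmaFinite Q] (hPQ : P ≪ Q) (c : ℝ) :
    truncatedLlr P Q c =ᵐ[P] fun x ↦ min (llr P Q x) c := by
  filter_upwards [Measure.rnDeriv_pos hPQ] with x hx
  simp [truncatedLlr, hx.ne']

lemma exp_truncatedLlr_le (P Q : Measure α) [SigmaFinite P] (c : ℝ) :
    ∀ᵐ x ∂Q, exp (truncatedLlr P Q c x) ≤ (P.rnDeriv Q x).toReal + exp (-c) := by
  filter_upwards [exp_llr P Q] with x hx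
  unfold truncatedLlr
  split_ifs with h0
  · simp [h0]
  · rw [if_neg h0] at hx
    have h_exp_pos := exp_pos (-c)
    calc exp (min (llr P Q x) c) ≤ exp (llr P Q x) := exp_le_exp.2 (min_le_left _ _)
      _ ≤ (P.rnDeriv Q x).toReal + exp (-c) := by linarith

lemma integrable_exp_truncatedLlr (P Q : Measure α) [IsFiniteMeasure P] [IsFiniteMeasure Q]
    (c : ℝ) :
    Integrable (fun x ↦ exp (truncatedLlr P Q c x)) Q := by
  refine Integrable.mono'
    ((Measure.integrable_toReal_rnDeriv (μ := P)).add (integrable_const (exp (-c))))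
    (measurable_truncatedLlr P Q c).exp.aestronglyMeasurable ?_
  filter_upwards [exp_truncatedLlr_le P Q c] with x hx
  rwa [norm_of_nonneg (exp_pos _).le]

lemma log_integral_exp_truncatedLlr_le [IsProbabilityMeasure P] [IsProbabilityMeasure Q]
    (hPQ : P ≪ Q) (c : ℝ) :
    log (∫ x, exp (truncatedLlr P Q c x) ∂Q) ≤ exp (-c) := by
  have h_int : ∫ x, exp (truncatedLlr P Q c x) ∂Q ≤ 1 + exp (-c) := by
    calc ∫ x, exp (truncatedLlr P Q c x) ∂Q
        ≤ ∫ x, ((P.rnDeriv Q x).toReal + exp (-c)) ∂Q :=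
          integral_mono_ae (integrable_exp_truncatedLlr P Q c)
            (Measure.integrable_toReal_rnDeriv.add (integrable_const _)) (exp_truncatedLlr_le P Q c)
      _ = 1 + exp (-c) := by
          rw [integral_add Measure.integrable_toReal_rnDeriv (integrable_const _),
            Measure.integral_toReal_rnDeriv hPQ]
          simp
  calc log (∫ x, exp (truncatedLlr P Q c x) ∂Q)
      ≤ log (1 + exp (-c)) :=
        log_le_log (integral_exp_pos (integrable_exp_truncatedLlr P Q c)) h_int
    _ ≤ exp (-c) := by linarith [log_le_sub_one_of_pos (by positivity : 0 < 1 + exp (-c))]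

lemma integral_min_llr_sub_exp_neg_le [IsProbabilityMeasure P] [IsProbabilityMeasure Q]
    (hPQ : P ≪ Q) (c : ℝ) :
    ∫ x, min (llr P Q x) c ∂P - exp (-c) ≤
      ∫ x, truncatedLlr P Q c x ∂P - log (∫ x, exp (truncatedLlr P Q c x) ∂Q) := by
  rw [integral_congr_ae (truncatedLlr_ae_eq hPQ c)]
  linarith [log_integral_exp_truncatedLlr_le hPQ c]

end MeasureTheory

theorem klDiv_eq_iSup_donsker_varadhan
    {α : Type*} [MeasurableSpace α] (P Q : Measure α)
    [IsProbabilityMeasure P] [IsProbabilityMeasure Q] (hPQ : P ≪ Q) :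
    klDivReal P Q =
      ⨆ X : {X : α → ℝ // Integrable X P ∧ Integrable (fun a => Real.exp (X a)) Q},
        (∫ a, X.1 a ∂P - Real.log (∫ a, Real.exp (X.1 a) ∂Q)) := by
  set F := fun X : {X : α → ℝ // Integrable X P ∧ Integrable (fun a => Real.exp (X a)) Q} ↦
    ∫ a, X.1 a ∂P - Real.log (∫ a, Real.exp (X.1 a) ∂Q)
  obtain ⟨X, hX⟩ : ∃ X : ℕ → _, ∀ n : ℕ, ∫ x, min (llr P Q x) n ∂P - exp (-n) ≤ F (X n) :=
    ⟨fun n ↦ ⟨truncatedLlr P Q n,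
        (integrable_min_llr hPQ n).congr (truncatedLlr_ae_eq hPQ n).symm,
        integrable_exp_truncatedLlr P Q n⟩,
      fun n ↦ integral_min_llr_sub_exp_neg_le hPQ n⟩
  have h_mono := ae_of_all P fun x ↦ monotone_min_natCast (llr P Q x)
  have h_tendsto := ae_of_all P fun x ↦ tendsto_min_natCast_atTop (llr P Q x)
  rw [klDivReal]
  by_cases h_llr : Integrable (llr P Q) P
  · have h_le (Y) : F Y ≤ ∫ x, llr P Q x ∂P :=
      integral_sub_log_integral_exp_le_integral_llr hPQ h_llr Y.2.1 Y.2.2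
    have : Nonempty _ := ⟨X 0⟩
    refine le_antisymm ?_ (ciSup_le h_le)
    have h_lim := (integral_tendsto_of_tendsto_of_monotone (integrable_min_llr hPQ ·) h_llr
      h_mono h_tendsto).sub (tendsto_exp_neg_atTop_nhds_zero.comp tendsto_natCast_atTop_atTop)
    rw [sub_zero] at h_lim
    exact le_of_tendsto' h_lim fun n ↦
      (hX n).trans (le_ciSup ⟨_, Set.forall_mem_range.2 h_le⟩ _)
  · rw [integral_undef h_llr, Real.iSup_of_not_bddAbove]
    rintro ⟨B, hB⟩
    refine h_llr (integrable_of_monotone_of_bddAbove_integral (integrable_min_llr hPQ ·)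
      (measurable_llr P Q).aestronglyMeasurable h_mono h_tendsto ⟨B + 1, ?_⟩)
    rintro _ ⟨n, rfl⟩
    linarith [hX n, hB ⟨X n, rfl⟩, exp_le_one_iff.2 (neg_nonpos.2 (Nat.cast_nonneg (α := ℝ) n))]
end

section
/- Let X be a real random variable with variance σ_X², and let W ~ N(0, σ_W²) be a Gaussian random variable independent of X. Then the mutual information satisfies I(X; X + W) ≤ σ_X² / σ_W². -/
open MeasureTheory ProbabilityTheory Real NNReal

/-! Let `ν` be the law of `X` and `g_x` the density of `N(x, v)`. The pair `(X, X + W)` has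
density `g_x(y)` with respect to `ν ⊗ volume`, and `X + W` has density
`m(y) = ∫ g_x(y) dν(x)`, so `I(X; X + W) = E[log g_0(W)] - E[log m(X + W)]`.
Jensen's inequality gives `log m(y) ≥ ∫ log g_x(y) dν(x) = -log √(2πv) - E[(y - X)²] / (2v)`,
which is the convexity bound `D(N(x', v) ‖ ν ∗ N(0, v)) ≤ ∫ D(N(x', v) ‖ N(x, v)) dν(x)` in
disguise. Averaging over `y = X + W` puts `Var X + Var (X + W) = 2 Var X + v` in the numerator,
while `E[log g_0(W)] = -log √(2πv) - 1/2`, and the constants cancel. -/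

open Set
open scoped ENNReal

namespace MeasureTheory

lemma llr_withDensity_ofReal {α : Type*} [MeasurableSpace α] (ρ : Measure α) [SigmaFinite ρ]
    {f g : α → ℝ} (hf : Measurable f) (hg : Measurable g)
    (hf_pos : ∀ᵐ x ∂ρ, 0 < f x) (hg_pos : ∀ᵐ x ∂ρ, 0 < g x) :
    llr (ρ.withDensity fun x => ENNReal.ofReal (f x))
        (ρ.withDensity fun x => ENNReal.ofReal (g x)) =ᵐ[ρ] fun x => log (f x) - log (g x) := by
  have h_right := Measure.rnDeriv_withDensity_right (ρ.withDensity fun x => ENNReal.ofReal (f x))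
    ρ hg.ennreal_ofReal.aemeasurable (by filter_upwards [hg_pos] with x hx using by simpa using hx)
    (ae_of_all _ fun _ => ENNReal.ofReal_ne_top)
  have h_left := Measure.rnDeriv_withDensity ρ hf.ennreal_ofReal
  filter_upwards [h_right, h_left, hf_pos, hg_pos] with x hr hl hfx hgx
  rw [llr, hr, hl, ← ENNReal.ofReal_inv_of_pos hgx, ← ENNReal.ofReal_mul (by positivity),
    ENNReal.toReal_ofReal (by positivity), log_mul (by positivity) hfx.ne', log_inv]
  ring

end MeasureTheory

namespace ProbabilityTheory

lemma integral_sq_const_sub {Ω : Type*} [MeasurableSpace Ω] {μ : Measure Ω}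
    [IsProbabilityMeasure μ] {X : Ω → ℝ} (hX : MemLp X 2 μ) (y : ℝ) :
    ∫ ω, (y - X ω) ^ 2 ∂μ = Var[X; μ] + (y - μ[X]) ^ 2 := by
  have hY : MemLp (fun ω => y - X ω) 2 μ := (memLp_const y).sub hX
  rw [← variance_const_sub hX.aestronglyMeasurable y, variance_eq_sub hY,
    integral_sub (integrable_const y) (hX.integrable one_le_two), integral_const]
  simp

section Convolution

variable {ν₁ ν₂ : Measure ℝ} [IsProbabilityMeasure ν₁] [IsProbabilityMeasure ν₂]

lemma memLp_id_conv {p : ℝ≥0∞} (h₁ : MemLp id p ν₁) (h₂ : MemLp id p ν₂) :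
    MemLp id p (ν₁ ∗ ν₂) := by
  rw [Measure.conv, memLp_map_measure_iff (by fun_prop) (by fun_prop)]
  exact (h₁.comp_fst ν₂).add (h₂.comp_snd ν₁)

lemma integral_id_conv (h₁ : Integrable id ν₁) (h₂ : Integrable id ν₂) :
    ∫ x, x ∂(ν₁ ∗ ν₂) = ∫ x, x ∂ν₁ + ∫ x, x ∂ν₂ := by
  rw [Measure.conv, integral_map (by fun_prop) (by fun_prop),
    integral_add (f := fun p : ℝ × ℝ => p.1) (g := fun p : ℝ × ℝ => p.2)
      (h₁.comp_fst ν₂) (h₂.comp_snd ν₁),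
    integral_fun_fst fun x : ℝ => x, integral_fun_snd fun x : ℝ => x]
  simp

lemma variance_id_conv (h₁ : MemLp id 2 ν₁) (h₂ : MemLp id 2 ν₂) :
    Var[id; ν₁ ∗ ν₂] = Var[id; ν₁] + Var[id; ν₂] := by
  have h_indep := indepFun_prod (μ := ν₁) (ν := ν₂) measurable_id measurable_id
  rw [Measure.conv, variance_id_map (by fun_prop),
    show (fun p : ℝ × ℝ => p.1 + p.2) = (fun p => id p.1) + (fun p => id p.2) from rfl,
    h_indep.variance_add (h₁.comp_fst ν₂) (h₂.comp_snd ν₁)]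
  change Var[Prod.fst; ν₁.prod ν₂] + Var[Prod.snd; ν₁.prod ν₂] = _
  rw [← variance_id_map measurable_fst.aemeasurable,
    ← variance_id_map measurable_snd.aemeasurable, Measure.map_fst_prod, Measure.map_snd_prod]
  simp

end Convolution

section GaussianDensity

variable {v : ℝ≥0}

lemma gaussianPDFReal_le_inv_sqrt (μ : ℝ) (v : ℝ≥0) (x : ℝ) :
    gaussianPDFReal μ v x ≤ (√(2 * π * v))⁻¹ := by
  rw [gaussianPDFReal]
  refine mul_le_of_le_one_right (by positivity) (exp_le_one_iff.mpr ?_)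
  exact div_nonpos_of_nonpos_of_nonneg (neg_nonpos.mpr (sq_nonneg _)) (by positivity)

lemma log_gaussianPDFReal (μ : ℝ) (hv : v ≠ 0) (x : ℝ) :
    log (gaussianPDFReal μ v x) = -log √(2 * π * v) - (x - μ) ^ 2 / (2 * v) := by
  have : 0 < √(2 * π * v) := by positivity
  rw [gaussianPDFReal, log_mul (by positivity) (exp_ne_zero _), log_inv, log_exp]
  ring

lemma measurable_gaussianPDFReal_uncurry (v : ℝ≥0) :
    Measurable fun p : ℝ × ℝ => gaussianPDFReal p.1 v p.2 := by
  unfold gaussianPDFReal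
  fun_prop

lemma integrable_log_gaussianPDFReal (μ : ℝ) (hv : v ≠ 0) :
    Integrable (fun x => log (gaussianPDFReal μ v x)) (gaussianReal μ v) := by
  simp_rw [log_gaussianPDFReal μ hv]
  exact (integrable_const _).sub
    (((memLp_id_gaussianReal 2).sub (memLp_const μ)).integrable_sq.div_const _)

lemma integral_log_gaussianPDFReal (μ : ℝ) (hv : v ≠ 0) :
    ∫ x, log (gaussianPDFReal μ v x) ∂gaussianReal μ v = -log √(2 * π * v) - 1 / 2 := by
  have h_sq : Integrable (fun x => (x - μ) ^ 2) (gaussianReal μ v) :=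
    ((memLp_id_gaussianReal 2).sub (memLp_const μ)).integrable_sq
  have h_var : ∫ x, (x - μ) ^ 2 ∂gaussianReal μ v = v := by
    simpa [variance_eq_integral measurable_id.aemeasurable, integral_id_gaussianReal] using
      variance_id_gaussianReal (μ := μ) (v := v)
  simp_rw [log_gaussianPDFReal μ hv]
  rw [integral_sub (integrable_const _) (h_sq.div_const _), integral_const, integral_div, h_var]
  field_simp
  simp

lemma gaussianReal_preimage_const_add (μ x : ℝ) (v : ℝ≥0) {B : Set ℝ}
    (hB : MeasurableSet B) :
    gaussianReal μ v ((x + ·) ⁻¹' B) = gaussianReal (μ + x) v B := by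
  rw [← gaussianReal_map_const_add, Measure.map_apply (measurable_const_add x) hB]

end GaussianDensity

noncomputable def gaussianMixturePDFReal (ν : Measure ℝ) (v : ℝ≥0) (y : ℝ) : ℝ :=
  ∫ x, gaussianPDFReal x v y ∂ν

section GaussianMixture

variable (ν : Measure ℝ) {v : ℝ≥0}

lemma integrable_gaussianPDFReal_mean [IsFiniteMeasure ν] (v : ℝ≥0) (y : ℝ) :
    Integrable (fun x => gaussianPDFReal x v y) ν := by
  refine Integrable.of_bound (C := (√(2 * π * v))⁻¹) ?_ (ae_of_all _ fun x => ?_)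
  · exact ((measurable_gaussianPDFReal_uncurry v).comp
      (measurable_id.prodMk measurable_const)).aestronglyMeasurable
  · rw [norm_of_nonneg (gaussianPDFReal_nonneg _ _ _)]
    exact gaussianPDFReal_le_inv_sqrt _ _ _

lemma measurable_gaussianMixturePDFReal [SFinite ν] (v : ℝ≥0) :
    Measurable (gaussianMixturePDFReal ν v) :=
  (measurable_gaussianPDFReal_uncurry v).stronglyMeasurable.integral_prod_left.measurable

lemma gaussianMixturePDFReal_pos [IsFiniteMeasure ν] [NeZero ν] (hv : v ≠ 0) (y : ℝ) :
    0 < gaussianMixturePDFReal ν v y := by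
  have h_supp : Function.support (fun x => gaussianPDFReal x v y) = univ :=
    eq_univ_of_forall fun x => (gaussianPDFReal_pos x v y hv).ne'
  rw [gaussianMixturePDFReal, integral_pos_iff_support_of_nonneg
    (fun x => gaussianPDFReal_nonneg x v y) (integrable_gaussianPDFReal_mean ν v y), h_supp]
  simp [NeZero.ne ν]

lemma gaussianMixturePDFReal_le [IsProbabilityMeasure ν] (v : ℝ≥0) (y : ℝ) :
    gaussianMixturePDFReal ν v y ≤ (√(2 * π * v))⁻¹ := by
  calc gaussianMixturePDFReal ν v y ≤ ∫ _, (√(2 * π * v))⁻¹ ∂ν :=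
        integral_mono (integrable_gaussianPDFReal_mean ν v y) (integrable_const _)
          fun x => gaussianPDFReal_le_inv_sqrt _ _ _
    _ = (√(2 * π * v))⁻¹ := by simp

lemma log_gaussianMixturePDFReal_le [IsProbabilityMeasure ν] (hv : v ≠ 0) (y : ℝ) :
    log (gaussianMixturePDFReal ν v y) ≤ -log √(2 * π * v) := by
  rw [← log_inv]
  exact log_le_log (gaussianMixturePDFReal_pos ν hv y) (gaussianMixturePDFReal_le ν v y)

lemma log_gaussianMixturePDFReal_ge [IsProbabilityMeasure ν] (hv : v ≠ 0) (hν : MemLp id 2 ν)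
    (y : ℝ) :
    -log √(2 * π * v) - (Var[id; ν] + (y - ∫ x, x ∂ν) ^ 2) / (2 * v)
      ≤ log (gaussianMixturePDFReal ν v y) := by
  have h_sq : Integrable (fun x => (y - x) ^ 2) ν := ((memLp_const y).sub hν).integrable_sq
  have h_log : (fun x => log (gaussianPDFReal x v y))
      = fun x => -log √(2 * π * v) - (y - x) ^ 2 / (2 * v) := by
    ext x
    rw [log_gaussianPDFReal x hv y]
  have h_exp_log :
      (fun x => exp (log (gaussianPDFReal x v y))) = fun x => gaussianPDFReal x v y := by
    ext x
    exact exp_log (gaussianPDFReal_pos x v y hv)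
  have h_jensen :
      exp (∫ x, log (gaussianPDFReal x v y) ∂ν) ≤ gaussianMixturePDFReal ν v y := by
    have := convexOn_exp.map_integral_le continuous_exp.continuousOn isClosed_univ
      (ae_of_all ν fun x => mem_univ (log (gaussianPDFReal x v y)))
      (by rw [h_log]; exact (integrable_const _).sub (h_sq.div_const _))
      (by rw [Function.comp_def, h_exp_log]; exact integrable_gaussianPDFReal_mean ν v y)
    rwa [h_exp_log] at this
  calc -log √(2 * π * v) - (Var[id; ν] + (y - ∫ x, x ∂ν) ^ 2) / (2 * v)
      = ∫ x, log (gaussianPDFReal x v y) ∂ν := by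
        rw [h_log, integral_sub (integrable_const _) (h_sq.div_const _), integral_const,
          integral_div, show ∫ x, (y - x) ^ 2 ∂ν = _ from integral_sq_const_sub hν y]
        simp
    _ ≤ log (gaussianMixturePDFReal ν v y) :=
        (le_log_iff_exp_le (gaussianMixturePDFReal_pos ν hv y)).mpr h_jensen

lemma integrable_log_gaussianMixturePDFReal [IsProbabilityMeasure ν] (hv : v ≠ 0)
    (hν : MemLp id 2 ν) (ρ : Measure ℝ) [IsProbabilityMeasure ρ] (hρ : MemLp id 2 ρ) :
    Integrable (fun y => log (gaussianMixturePDFReal ν v y)) ρ := by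
  refine integrable_of_le_of_le (g₁ := fun y => -log √(2 * π * v)
      - (Var[id; ν] + (y - ∫ x, x ∂ν) ^ 2) / (2 * v)) (g₂ := fun _ => -log √(2 * π * v))
    (measurable_gaussianMixturePDFReal ν v).log.aestronglyMeasurable
    (ae_of_all _ (log_gaussianMixturePDFReal_ge ν hv hν))
    (ae_of_all _ (log_gaussianMixturePDFReal_le ν hv)) ?_ (integrable_const _)
  exact (integrable_const _).sub
    (((integrable_const _).add (hρ.sub (memLp_const _)).integrable_sq).div_const _)

lemma integral_neg_log_gaussianMixturePDFReal_le [IsProbabilityMeasure ν] (hv : v ≠ 0)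
    (hν : MemLp id 2 ν) (ρ : Measure ℝ) [IsProbabilityMeasure ρ] (hρ : MemLp id 2 ρ) :
    ∫ y, -log (gaussianMixturePDFReal ν v y) ∂ρ
      ≤ log √(2 * π * v)
        + (Var[id; ν] + Var[id; ρ] + (∫ y, y ∂ρ - ∫ x, x ∂ν) ^ 2) / (2 * v) := by
  have h_sq : Integrable (fun y => (y - ∫ x, x ∂ν) ^ 2) ρ :=
    (hρ.sub (memLp_const _)).integrable_sq
  calc ∫ y, -log (gaussianMixturePDFReal ν v y) ∂ρ
      ≤ ∫ y, (log √(2 * π * v) + Var[id; ν] / (2 * v) + (y - ∫ x, x ∂ν) ^ 2 / (2 * v)) ∂ρ := by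
        refine integral_mono (integrable_log_gaussianMixturePDFReal ν hv hν ρ hρ).neg
          ((integrable_const _).add (h_sq.div_const _)) fun y => ?_
        have := log_gaussianMixturePDFReal_ge ν hv hν y
        rw [add_div] at this
        linarith
    _ = _ := by
        rw [integral_add (integrable_const _) (h_sq.div_const _), integral_const, integral_div]
        simp_rw [sub_sq_comm _ (∫ x, x ∂ν)]
        rw [show ∫ y, (∫ x, x ∂ν - y) ^ 2 ∂ρ = _ from integral_sq_const_sub hρ _]
        simp only [probReal_univ, one_smul, id]
        ring

end GaussianMixture

section Laws

variable (ν : Measure ℝ) {v : ℝ≥0}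

lemma map_prod_gaussianReal_eq_withDensity [SFinite ν] (hv : v ≠ 0) :
    (ν.prod (gaussianReal 0 v)).map (fun p => (p.1, p.1 + p.2))
      = (ν.prod volume).withDensity (fun p => gaussianPDF p.1 v p.2) := by
  have h_meas : Measurable (Function.uncurry fun x y => gaussianPDF x v y) :=
    (measurable_gaussianPDFReal_uncurry v).ennreal_ofReal
  have : IsSFiniteKernel ((Kernel.const ℝ volume).withDensity fun x y => gaussianPDF x v y) :=
    Kernel.IsSFiniteKernel.withDensity _ fun _ _ => ENNReal.ofReal_ne_top
  rw [← Measure.compProd_const (ν := (volume : Measure ℝ)),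
    ← Measure.compProd_withDensity h_meas]
  ext s hs
  rw [Measure.map_apply (by fun_prop) hs,
    Measure.prod_apply (measurable_fst.prodMk (by fun_prop) hs), Measure.compProd_apply hs]
  refine lintegral_congr fun x => ?_
  rw [Kernel.withDensity_apply _ h_meas, Kernel.const_apply, ← gaussianReal_of_var_ne_zero x hv]
  have h_shift := gaussianReal_preimage_const_add 0 x v (measurable_prodMk_left (x := x) hs)
  rwa [zero_add] at h_shift

lemma conv_gaussianReal_eq_withDensity [IsFiniteMeasure ν] (hv : v ≠ 0) :
    ν ∗ gaussianReal 0 v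
      = volume.withDensity fun y => ENNReal.ofReal (gaussianMixturePDFReal ν v y) := by
  ext B hB
  have h_meas : Measurable (Function.uncurry fun x y => gaussianPDF x v y) :=
    (measurable_gaussianPDFReal_uncurry v).ennreal_ofReal
  rw [Measure.conv, Measure.map_apply (by fun_prop) hB, Measure.prod_apply (measurable_add hB),
    withDensity_apply _ hB]
  calc ∫⁻ x, gaussianReal 0 v ((x + ·) ⁻¹' B) ∂ν
      = ∫⁻ x, (∫⁻ y in B, gaussianPDF x v y) ∂ν := by
        refine lintegral_congr fun x => ?_
        rw [← gaussianReal_apply x hv]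
        have h_shift := gaussianReal_preimage_const_add 0 x v hB
        rwa [zero_add] at h_shift
    _ = ∫⁻ y in B, ∫⁻ x, gaussianPDF x v y ∂ν :=
        lintegral_lintegral_swap (h_meas.aemeasurable)
    _ = ∫⁻ y in B, ENNReal.ofReal (gaussianMixturePDFReal ν v y) := by
        refine lintegral_congr fun y => ?_
        exact (ofReal_integral_eq_lintegral_ofReal (integrable_gaussianPDFReal_mean ν v y)
          (ae_of_all _ fun x => gaussianPDFReal_nonneg x v y)).symm

lemma klDivReal_map_prod_gaussianReal_eq [IsProbabilityMeasure ν] (hv : v ≠ 0)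
    (hν : MemLp id 2 ν) :
    klDivReal ((ν.prod (gaussianReal 0 v)).map fun p => (p.1, p.1 + p.2))
        (ν.prod (ν ∗ gaussianReal 0 v))
      = ∫ w, log (gaussianPDFReal 0 v w) ∂gaussianReal 0 v
        - ∫ y, log (gaussianMixturePDFReal ν v y) ∂(ν ∗ gaussianReal 0 v) := by
  have hT : Measurable fun p : ℝ × ℝ => (p.1, p.1 + p.2) := by fun_prop
  have h_mix := measurable_gaussianMixturePDFReal ν v
  have h_llr : llr ((ν.prod (gaussianReal 0 v)).map fun p => (p.1, p.1 + p.2))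
        (ν.prod (ν ∗ gaussianReal 0 v))
      =ᵐ[(ν.prod (gaussianReal 0 v)).map fun p => (p.1, p.1 + p.2)]
        fun p => log (gaussianPDFReal p.1 v p.2) - log (gaussianMixturePDFReal ν v p.2) := by
    rw [conv_gaussianReal_eq_withDensity ν hv, prod_withDensity_right h_mix.ennreal_ofReal,
      map_prod_gaussianReal_eq_withDensity ν hv]
    exact (withDensity_absolutelyContinuous _ _).ae_le <| llr_withDensity_ofReal _
      (measurable_gaussianPDFReal_uncurry v) (h_mix.comp measurable_snd)
      (ae_of_all _ fun p => gaussianPDFReal_pos _ _ _ hv)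
      (ae_of_all _ fun p => gaussianMixturePDFReal_pos ν hv p.2)
  have h_shift (p : ℝ × ℝ) : gaussianPDFReal p.1 v (p.1 + p.2) = gaussianPDFReal 0 v p.2 := by
    rw [add_comm, gaussianPDFReal_add, sub_self]
  have h_int_noise : Integrable (fun p : ℝ × ℝ => log (gaussianPDFReal 0 v p.2))
      (ν.prod (gaussianReal 0 v)) :=
    (integrable_log_gaussianPDFReal 0 hv).comp_snd ν
  have h_int_mix : Integrable (fun p : ℝ × ℝ => log (gaussianMixturePDFReal ν v (p.1 + p.2)))
      (ν.prod (gaussianReal 0 v)) :=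
    (integrable_map_measure h_mix.log.aestronglyMeasurable (by fun_prop)).mp
      (integrable_log_gaussianMixturePDFReal ν hv hν (ν ∗ gaussianReal 0 v)
        (memLp_id_conv hν (memLp_id_gaussianReal 2)))
  rw [klDivReal, integral_congr_ae h_llr, integral_map hT.aemeasurable (by fun_prop)]
  simp_rw [h_shift]
  rw [integral_sub h_int_noise h_int_mix,
    integral_fun_snd fun w => log (gaussianPDFReal 0 v w), Measure.conv,
    integral_map (by fun_prop) h_mix.log.aestronglyMeasurable]
  simp

theorem klDivReal_map_prod_gaussianReal_le [IsProbabilityMeasure ν] (hv : v ≠ 0)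
    (hν : MemLp id 2 ν) :
    klDivReal ((ν.prod (gaussianReal 0 v)).map fun p => (p.1, p.1 + p.2))
        (ν.prod (ν ∗ gaussianReal 0 v)) ≤ Var[id; ν] / v := by
  have hG : MemLp id 2 (gaussianReal 0 v) := memLp_id_gaussianReal 2
  have h_cross := integral_neg_log_gaussianMixturePDFReal_le ν hv hν _ (memLp_id_conv hν hG)
  rw [variance_id_conv hν hG, integral_id_conv (hν.integrable one_le_two)
    (hG.integrable one_le_two), variance_id_gaussianReal, integral_id_gaussianReal, add_zero,
    sub_self, integral_neg] at h_cross
  have h_split : (Var[id; ν] + (Var[id; ν] + v) + 0 ^ 2) / (2 * v) = Var[id; ν] / v + 1 / 2 := by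
    field_simp
    ring
  rw [klDivReal_map_prod_gaussianReal_eq ν hv hν, integral_log_gaussianPDFReal 0 hv]
  linarith

end Laws

end ProbabilityTheory

theorem mutualInfo_add_gaussian_noise_le
    {Ω : Type*} [MeasurableSpace Ω] (μ : Measure Ω) [IsProbabilityMeasure μ]
    (X W : Ω → ℝ) (vW : ℝ≥0) (hvW : vW ≠ 0)
    (hX : Measurable X) (hW : Measurable W)
    (hX2 : MemLp X 2 μ)
    (hWlaw : μ.map W = gaussianReal 0 vW)
    (hindep : IndepFun X W μ) :
    mutualInfo μ X (fun ω => X ω + W ω) ≤ variance X μ / (vW : ℝ) := by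
  have : IsProbabilityMeasure (μ.map X) := Measure.isProbabilityMeasure_map hX.aemeasurable
  have h_joint : μ.map (fun ω => (X ω, W ω)) = (μ.map X).prod (gaussianReal 0 vW) := by
    rw [← hWlaw]
    exact (indepFun_iff_map_prod_eq_prod_map_map hX.aemeasurable hW.aemeasurable).mp hindep
  have h_sum : μ.map (fun ω => X ω + W ω) = μ.map X ∗ gaussianReal 0 vW := by
    rw [← hWlaw]
    exact hindep.map_add_eq_map_conv_map₀' hX.aemeasurable hW.aemeasurable
      inferInstance inferInstance
  have h_pair : μ.map (fun ω => (X ω, X ω + W ω))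
      = (μ.map fun ω => (X ω, W ω)).map fun p => (p.1, p.1 + p.2) :=
    (Measure.map_map (g := fun p : ℝ × ℝ => (p.1, p.1 + p.2)) (by fun_prop)
      (hX.prodMk hW)).symm
  rw [mutualInfo, h_pair, h_joint, h_sum, ← variance_id_map hX.aemeasurable]
  exact klDivReal_map_prod_gaussianReal_le _ hvW
    ((memLp_map_measure_iff (by fun_prop) hX.aemeasurable).mpr hX2)
end

section
/- Let φ = (φ₁,...,φ_m) be a random vector, T a random variable in {1,...,m}, and φ̃ an independent copy of φ (drawn from the marginal law of φ, independent of both T and φ). Then D(law(φ_T) ‖ law(φ̃_T)) ≤ I(T; φ), where φ_T and φ̃_T denote the T-th coordinate of φ and φ̃ respectively. -/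
open MeasureTheory ProbabilityTheory Real NNReal

/-!
Let `P` be the joint law of `(T, φ)`, `Q` the product of its marginals and `e (i, x) = x i`.
The law of `φ_T` is `P.map e`, and by independence and `φ̃ ~ φ` that of `φ̃_T` is `Q.map e`, so the
data-processing inequality bounds the left side by `D(P ‖ Q) = I(T; φ)`. Since `klDivReal` is the
junk value `0` when the divergence is infinite, `D(P ‖ Q) < ∞` is needed; it holds because `T`
takes finitely many values, whence `P ≤ c • Q` for a finite `c` and `dP/dQ` is bounded.
-/

open scoped ENNReal
open InformationTheory

namespace MeasureTheory.Measure

variable {α β : Type*} [MeasurableSpace α] [MeasurableSpace β]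

lemma measure_singleton_prod_le_mul_fst_mul_snd [MeasurableSingletonClass α] (ρ : Measure (α × β))
    {i : α} {c : ℝ≥0} (hc : ρ.fst {i} ≠ 0 → 1 ≤ c * ρ.fst {i}) (t : Set β) :
    ρ ({i} ×ˢ t) ≤ c * (ρ.fst {i} * ρ.snd t) := by
  by_cases hi : ρ.fst {i} = 0
  · have hnull : ρ ({i} ×ˢ t) = 0 := measure_mono_null (fun x hx ↦ hx.1)
      ((fst_apply (measurableSet_singleton i) (ρ := ρ)).symm.trans hi)
    simp [hnull]
  calc ρ ({i} ×ˢ t) ≤ ρ (Prod.snd ⁻¹' t) := measure_mono fun x hx ↦ hx.2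
    _ ≤ ρ.snd t := le_map_apply measurable_snd.aemeasurable t
    _ ≤ c * ρ.fst {i} * ρ.snd t := le_mul_of_one_le_left' (hc hi)
    _ = c * (ρ.fst {i} * ρ.snd t) := mul_assoc _ _ _

lemma exists_le_smul_prod_fst_snd [Fintype α] [MeasurableSingletonClass α]
    (ρ : Measure (α × β)) [IsFiniteMeasure ρ] : ∃ c : ℝ≥0, ρ ≤ c • ρ.fst.prod ρ.snd := by
  -- null atoms contribute `0⁻¹ = 0` in `ℝ≥0`, and need no weight since `ρ` vanishes on them
  set c : ℝ≥0 := ∑ i, (ρ.fst {i}).toNNReal⁻¹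
  have hc (i : α) (hi : ρ.fst {i} ≠ 0) : 1 ≤ (c : ℝ≥0∞) * ρ.fst {i} := by
    have hfin : ρ.fst {i} ≠ ∞ := measure_ne_top _ _
    rw [← ENNReal.coe_toNNReal hfin, ← ENNReal.coe_mul, ENNReal.one_le_coe_iff]
    calc 1 = (ρ.fst {i}).toNNReal⁻¹ * (ρ.fst {i}).toNNReal :=
          (inv_mul_cancel₀ (by simpa [ENNReal.toNNReal_eq_zero_iff, hfin] using hi)).symm
      _ ≤ c * (ρ.fst {i}).toNNReal :=
          mul_le_mul_left (Finset.single_le_sum (f := fun j ↦ (ρ.fst {j}).toNNReal⁻¹)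
            (fun j _ ↦ zero_le) (Finset.mem_univ i)) _
  refine ⟨c, le_iff.mpr fun s hs ↦ ?_⟩
  have hslice (i : α) : Prod.fst ⁻¹' {i} ∩ s = {i} ×ˢ (Prod.mk i ⁻¹' s) := by
    ext ⟨a, b⟩; simp +contextual
  calc ρ s = ∑ i, ρ ({i} ×ˢ (Prod.mk i ⁻¹' s)) := by
        rw [← restrict_apply_univ, ← Set.preimage_univ (f := Prod.fst), ← Finset.coe_univ,
          ← sum_measure_preimage_singleton _ fun i _ ↦ measurable_fst (measurableSet_singleton i)]
        simp only [restrict_apply (measurable_fst (measurableSet_singleton _)), hslice]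
    _ ≤ ∑ i, c * (ρ.fst {i} * ρ.snd (Prod.mk i ⁻¹' s)) :=
        Finset.sum_le_sum fun i _ ↦ measure_singleton_prod_le_mul_fst_mul_snd ρ (hc i) _
    _ = (c • ρ.fst.prod ρ.snd) s := by
        rw [smul_apply, prod_apply hs, lintegral_fintype, ENNReal.smul_def, smul_eq_mul,
          Finset.mul_sum]
        simp only [mul_comm]

lemma rnDeriv_le_of_le_smul {μ ν : Measure α} [SigmaFinite ν] {c : ℝ≥0∞} (h : μ ≤ c • ν) :
    μ.rnDeriv ν ≤ᵐ[ν] fun _ ↦ c :=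
  ae_le_of_forall_setLIntegral_le_of_sigmaFinite (μ.measurable_rnDeriv ν) fun s _ _ ↦ by
    rw [setLIntegral_const, ← smul_eq_mul (a := c), ← smul_apply]
    exact (setLIntegral_rnDeriv_le s).trans (h s)

end MeasureTheory.Measure

section

variable {α β : Type*} [MeasurableSpace α] [MeasurableSpace β] {μ ν : Measure α}

lemma InformationTheory.klDiv_ne_top_of_le_smul [IsFiniteMeasure μ] [IsFiniteMeasure ν] {c : ℝ≥0} (h : μ ≤ c • ν) : klDiv μ ν ≠ ∞ := by
  obtain ⟨B, hB⟩ := isCompact_Icc.exists_bound_of_continuousOn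
    (f := klFun) (s := Set.Icc 0 (c : ℝ)) continuous_klFun.continuousOn
  rw [klDiv_eq_lintegral_klFun_of_ac (Measure.absolutelyContinuous_of_le_smul h)]
  refine ne_top_of_le_ne_top (b := ∫⁻ _, ENNReal.ofReal B ∂ν) (by
    rw [lintegral_const]; exact ENNReal.mul_ne_top ENNReal.ofReal_ne_top (measure_ne_top ν _)) ?_
  refine lintegral_mono_ae ?_
  filter_upwards [Measure.rnDeriv_le_of_le_smul h] with x hx
  refine ENNReal.ofReal_le_ofReal ((le_abs_self _).trans (hB _ ⟨ENNReal.toReal_nonneg, ?_⟩))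
  exact ENNReal.toReal_le_of_le_ofReal c.coe_nonneg (by simpa using hx)

lemma klDivReal_eq_toReal_klDiv [IsFiniteMeasure μ] [IsFiniteMeasure ν] (hμν : μ ≪ ν) (h : μ Set.univ = ν Set.univ) :
    klDivReal μ ν = (klDiv μ ν).toReal :=
  (toReal_klDiv_of_measure_eq hμν h).symm

lemma klDivReal_map_le_of_le_smul [IsProbabilityMeasure μ] [IsProbabilityMeasure ν]
    {c : ℝ≥0} (h : μ ≤ c • ν) {g : α → β} (hg : Measurable g) :
    klDivReal (μ.map g) (ν.map g) ≤ klDivReal μ ν := by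
  have hμν := Measure.absolutelyContinuous_of_le_smul h
  have : IsProbabilityMeasure (μ.map g) := Measure.isProbabilityMeasure_map hg.aemeasurable
  have : IsProbabilityMeasure (ν.map g) := Measure.isProbabilityMeasure_map hg.aemeasurable
  rw [klDivReal_eq_toReal_klDiv hμν (by simp), klDivReal_eq_toReal_klDiv (hμν.map hg) (by simp)]
  exact ENNReal.toReal_mono (klDiv_ne_top_of_le_smul h) (klDiv_map_le μ ν hg)

end

theorem klDiv_selected_le_mutualInfo
    {Ω : Type*} [MeasurableSpace Ω] (μ : Measure Ω) [IsProbabilityMeasure μ]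
    {m : ℕ} (T : Ω → Fin m) (φ φt : Ω → Fin m → ℝ)
    (hT : Measurable T) (hφ : Measurable φ) (hφt : Measurable φt)
    (hcopy : μ.map φt = μ.map φ)
    (hindep : IndepFun (fun ω => (T ω, φ ω)) φt μ) :
    klDivReal (μ.map fun ω => φ ω (T ω)) (μ.map fun ω => φt ω (T ω)) ≤
      mutualInfo μ T φ := by
  set P := μ.map fun ω => (T ω, φ ω)
  have : IsProbabilityMeasure P := Measure.isProbabilityMeasure_map (hT.prodMk hφ).aemeasurable
  set e : Fin m × (Fin m → ℝ) → ℝ := fun q => q.2 q.1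
  have he : Measurable e := measurable_from_prod_countable_right fun i ↦ measurable_pi_apply i
  obtain ⟨c, hc⟩ := P.exists_le_smul_prod_fst_snd
  have hlaw : μ.map (fun ω => φ ω (T ω)) = P.map e := (Measure.map_map he (hT.prodMk hφ)).symm
  have hlaw_copy : μ.map (fun ω => φt ω (T ω)) = (P.fst.prod P.snd).map e := by
    have hTφt : IndepFun T φt μ := hindep.comp measurable_fst measurable_id
    rw [Measure.fst_map_prodMk hφ, Measure.snd_map_prodMk hT, ← hcopy,
      ← (indepFun_iff_map_prod_eq_prod_map_map hT.aemeasurable hφt.aemeasurable).mp hTφt,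
      Measure.map_map he (hT.prodMk hφt)]
    rfl
  calc klDivReal (μ.map fun ω => φ ω (T ω)) (μ.map fun ω => φt ω (T ω))
      = klDivReal (P.map e) ((P.fst.prod P.snd).map e) := by rw [hlaw, hlaw_copy]
    _ ≤ klDivReal P (P.fst.prod P.snd) := klDivReal_map_le_of_le_smul hc he
    _ = mutualInfo μ T φ := by rw [Measure.fst_map_prodMk hφ, Measure.snd_map_prodMk hT]; rfl
end

section
/- Let φ₁,...,φ_m be random variables each uniformly distributed on [0,1] (not necessarily independent), let ε ∈ (0, 1/2), define Z_{ε,i} = 1{φᵢ < ε} and Z_ε = (Z_{ε,1},...,Z_{ε,m}), and let T be a random variable in {1,...,m}. Then P(φ_T < ε) ≤ ε + √(I(T; Z_ε)/log(1/(2ε))). -/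
open MeasureTheory ProbabilityTheory Real NNReal

/-!
Write `P` for the joint law of `(T, Z_ε)` and `Q` for the product of its marginals, so that
`I(T; Z_ε) = KL(P ‖ Q)`, and let `f (t, z) = 1{z t}`. Then `E_P f = P(φ_T < ε)`, while under `Q`
the index is independent of `z`, so `f` is a Bernoulli(ε) indicator with mean `ε` on every slice
`t`. A Bernoulli(ε) variable minus its mean is sub-Gaussian with variance proxy
`σ² = 1 / (2 log (1 / (2ε)))`, and by the Donsker–Varadhan variational formula
`λ (E_P f - E_Q f) ≤ KL(P ‖ Q) + λ² σ² / 2` for every `λ`; the discriminant of this quadratic gives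
`E_P f - E_Q f ≤ √(2 σ² KL(P ‖ Q))`. For `log (1 / (2ε)) ≤ 2` the sub-Gaussian bound is
Hoeffding's lemma; for smaller `ε` it comes from elementary estimates on `exp`, using
`2ε = exp (-log (1 / (2ε)))`.
-/

lemma exp_le_one_add_add_sq_div_two {x : ℝ} (hx : x ≤ 0) : exp x ≤ 1 + x + x ^ 2 / 2 := by
  have hq := quadratic_le_exp_of_nonneg (neg_nonneg.2 hx)
  have hprod : exp x * exp (-x) = 1 := by rw [← exp_add, add_neg_cancel, exp_zero]
  have hp : 0 ≤ 1 + x + x ^ 2 / 2 := by nlinarith [sq_nonneg (x + 1)]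
  nlinarith [exp_pos x, mul_nonneg (exp_pos x).le (pow_nonneg (sq_nonneg x) 2),
    mul_le_mul_of_nonneg_left hq (exp_pos x).le]

lemma two_sub_mul_exp_le_two_add {x : ℝ} (hx : 0 ≤ x) : (2 - x) * exp x ≤ 2 + x := by
  have hmono : MonotoneOn (fun y => 2 + y - (2 - y) * exp y) (Set.Ici 0) := by
    refine monotoneOn_of_hasDerivWithinAt_nonneg (f' := fun y => 1 - (1 - y) * exp y)
      (convex_Ici 0) (by fun_prop) (fun y _ => ?_) (fun y _ => ?_)
    · refine (((hasDerivAt_id y).const_add 2).sub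
        (((hasDerivAt_id y).const_sub 2).mul (hasDerivAt_exp y))).hasDerivWithinAt.congr_deriv ?_
      simp only [id_eq]; ring
    · have hprod : exp y * exp (-y) = 1 := by rw [← exp_add, add_neg_cancel, exp_zero]
      nlinarith [one_sub_le_exp_neg y, exp_pos y]
  simpa using hmono Set.self_mem_Ici hx hx

lemma monotoneOn_exp_sub_one_sub_div_sq :
    MonotoneOn (fun x => (exp x - 1 - x) / x ^ 2) (Set.Ioi 0) := by
  refine monotoneOn_of_hasDerivWithinAt_nonneg
    (f' := fun y => ((exp y - 1) * y ^ 2 - (exp y - 1 - y) * (2 * y)) / (y ^ 2) ^ 2)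
    (convex_Ioi 0) ?_ (fun y hy => ?_) (fun y hy => ?_)
  · exact ContinuousOn.div (by fun_prop) (by fun_prop) fun y hy => pow_ne_zero 2 (ne_of_gt hy)
  · rw [interior_Ioi] at hy
    refine (HasDerivAt.hasDerivWithinAt ?_)
    refine ((((hasDerivAt_exp y).sub_const 1).fun_sub (hasDerivAt_id' y)).fun_div
      (hasDerivAt_pow 2 y) (pow_ne_zero 2 (ne_of_gt hy))).congr_deriv ?_
    push_cast; ring
  · rw [interior_Ioi] at hy
    have hy : 0 < y := hy
    apply div_nonneg _ (by positivity)
    have := two_sub_mul_exp_le_two_add hy.le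
    nlinarith

lemma one_sub_add_mul_exp_le_exp_add {ε l c : ℝ} (h : ε * (exp l - 1 - l) ≤ c) :
    1 - ε + ε * exp l ≤ exp (l * ε + c) :=
  calc 1 - ε + ε * exp l = ε * (exp l - 1) + 1 := by ring
  _ ≤ exp (ε * (exp l - 1)) := add_one_le_exp _
  _ ≤ exp (l * ε + c) := exp_le_exp.2 (by linarith)

lemma one_add_exp_div_two_le {t L : ℝ} (ht : 0 ≤ t) (hL : 2 ≤ L) :
    1 + exp t / 2 ≤ exp ((L + t) ^ 2 / (4 * L)) := by
  rcases le_total 1 t with h1 | h1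
  · have hE : t ≤ (L + t) ^ 2 / (4 * L) := by
      rw [le_div_iff₀ (by linarith)]; nlinarith [sq_nonneg (t - L)]
    calc 1 + exp t / 2 ≤ exp t := by linarith [add_one_le_exp t]
    _ ≤ _ := exp_le_exp.2 hE
  · -- `u = exp (t / 2)` lies in `[1, √e]`, where `1 + u² / 2 ≤ √e u` as `√e ≥ 3 / 2`.
    have hE : (t + 1) / 2 ≤ (L + t) ^ 2 / (4 * L) := by
      rw [le_div_iff₀ (by linarith)]; nlinarith
    have hu1 : 1 ≤ exp (t / 2) := one_le_exp (by linarith)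
    have hus : exp (t / 2) ≤ exp (1 / 2) := exp_le_exp.2 (by linarith)
    have hs : 3 / 2 ≤ exp (1 / 2) := by linarith [add_one_le_exp (1 / 2 : ℝ)]
    have hsq : exp t = exp (t / 2) ^ 2 := by rw [← exp_nat_mul]; ring_nf
    have hmul : exp ((t + 1) / 2) = exp (1 / 2) * exp (t / 2) := by rw [← exp_add]; ring_nf
    calc 1 + exp t / 2 ≤ exp ((t + 1) / 2) := by
          rw [hsq, hmul]
          nlinarith [mul_nonneg (sub_nonneg.2 hu1) (sub_nonneg.2 hus)]
    _ ≤ _ := exp_le_exp.2 hE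

lemma one_sub_add_mul_exp_le {ε : ℝ} (hε : 0 < ε) (hL : 2 ≤ log (1 / (2 * ε))) (l : ℝ) :
    1 - ε + ε * exp l ≤ exp (l * ε + l ^ 2 / (4 * log (1 / (2 * ε)))) := by
  set L := log (1 / (2 * ε))
  have hεL : ε * exp L = 1 / 2 := by rw [exp_log (by positivity)]; field_simp
  rcases le_or_gt l 0 with hl | hl
  · refine one_sub_add_mul_exp_le_exp_add ?_
    have h2εL : 2 * ε * L ≤ 1 := by nlinarith [add_one_le_exp L]
    rw [le_div_iff₀ (by linarith)]
    nlinarith [mul_le_mul_of_nonneg_left (exp_le_one_add_add_sq_div_two hl) hε.le,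
      mul_le_mul_of_nonneg_right h2εL (sq_nonneg l)]
  rcases le_total l L with hlL | hlL
  · -- `(exp l - 1 - l) / l² ≤ (exp L - 1 - L) / L² < exp L / L²`, and `ε exp L / L² = 1 / (2L²)`.
    refine one_sub_add_mul_exp_le_exp_add ?_
    have hmono := monotoneOn_exp_sub_one_sub_div_sq hl (Set.mem_Ioi.2 (by linarith)) hlL
    simp only at hmono
    rw [div_le_div_iff₀ (by positivity) (by positivity)] at hmono
    rw [le_div_iff₀ (by linarith)]
    nlinarith [mul_le_mul_of_nonneg_left hmono hε.le, add_one_le_exp L, sq_nonneg l,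
      mul_nonneg (mul_nonneg hε.le (sq_nonneg l)) (by linarith : (0 : ℝ) ≤ L - 2)]
  · have hεl : ε * exp l = exp (l - L) / 2 := by
      have : exp l = exp L * exp (l - L) := by rw [← exp_add, add_sub_cancel]
      rw [this, ← mul_assoc, hεL]; ring
    have key := one_add_exp_div_two_le (sub_nonneg.2 hlL) hL
    rw [add_sub_cancel] at key
    calc 1 - ε + ε * exp l ≤ 1 + exp (l - L) / 2 := by linarith
    _ ≤ exp (l ^ 2 / (4 * L)) := key
    _ ≤ _ := exp_le_exp.2 (by nlinarith)

section
variable {α : Type*} [MeasurableSpace α] {P Q : Measure α} [IsProbabilityMeasure P]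
  [IsProbabilityMeasure Q]

lemma integral_le_integral_llr_add_log_integral_exp (hPQ : P ≪ Q)
    (hllr : Integrable (llr P Q) P) {f : α → ℝ} (hfP : Integrable f P)
    (hfQ : Integrable (fun x => exp (f x)) Q) :
    ∫ x, f x ∂P ≤ ∫ x, llr P Q x ∂P + log (∫ x, exp (f x) ∂Q) := by
  have : IsProbabilityMeasure (Q.tilted f) := isProbabilityMeasure_tilted hfQ
  have hgibbs := InformationTheory.integral_llr_add_sub_measure_univ_nonneg
    (hPQ.trans (absolutelyContinuous_tilted hfQ)) (integrable_llr_tilted_right hPQ hfP hllr hfQ)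
  rw [integral_llr_tilted_right hPQ hfP hfQ hllr] at hgibbs
  simp only [probReal_univ] at hgibbs
  linarith

lemma integral_sub_integral_le_sqrt_integral_llr (hPQ : P ≪ Q)
    (hllr : Integrable (llr P Q) P) {f : α → ℝ} (hfP : Integrable f P) {σ : ℝ}
    (hexp : ∀ l, Integrable (fun x => exp (l * (f x - ∫ y, f y ∂Q))) Q)
    (hf : IsSubGaussian Q (fun x => f x - ∫ y, f y ∂Q) σ) :
    ∫ x, f x ∂P - ∫ x, f x ∂Q ≤ √(2 * σ ^ 2 * ∫ x, llr P Q x ∂P) := by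
  set Δ := ∫ x, f x ∂P - ∫ x, f x ∂Q
  have hline : ∀ l, l * Δ ≤ ∫ x, llr P Q x ∂P + l ^ 2 * σ ^ 2 / 2 := by
    intro l
    have hDV := integral_le_integral_llr_add_log_integral_exp hPQ hllr
      (f := fun x => l * (f x - ∫ y, f y ∂Q)) ((hfP.sub (integrable_const _)).const_mul l) (hexp l)
    rw [integral_const_mul, integral_sub hfP (integrable_const _), integral_const,
      probReal_univ, one_smul] at hDV
    have hlog := (log_le_iff_le_exp (integral_exp_pos (hexp l))).2 (hf l)
    linarith
  have hdiscr : discrim (σ ^ 2 / 2) (-Δ) (∫ x, llr P Q x ∂P) ≤ 0 :=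
    discrim_le_zero fun l => by nlinarith [hline l]
  rw [discrim] at hdiscr
  exact (le_abs_self Δ).trans (abs_le_sqrt (by linarith))

end

lemma isSubGaussian_map_iff {Ω β : Type*} [MeasurableSpace Ω] [MeasurableSpace β]
    {μ : Measure Ω} {Z : Ω → β} (hZ : AEMeasurable Z μ) {g : β → ℝ} (hg : Measurable g) {σ : ℝ} :
    IsSubGaussian (μ.map Z) g σ ↔ IsSubGaussian μ (fun ω => g (Z ω)) σ := by
  simp only [IsSubGaussian]
  refine forall_congr' fun l => ?_
  rw [integral_map hZ (by fun_prop : Measurable fun x => exp (l * g x)).aestronglyMeasurable]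

lemma isSubGaussian_prod {β γ : Type*} [MeasurableSpace β] [MeasurableSpace γ]
    {ν : Measure β} {κ : Measure γ} [IsProbabilityMeasure ν] [SFinite κ] {g : β × γ → ℝ}
    {σ : ℝ} (hint : ∀ l, Integrable (fun x => exp (l * g x)) (ν.prod κ))
    (hg : ∀ b, IsSubGaussian κ (fun c => g (b, c)) σ) : IsSubGaussian (ν.prod κ) g σ := by
  intro l
  rw [integral_prod _ (hint l)]
  calc ∫ b, ∫ c, exp (l * g (b, c)) ∂κ ∂ν ≤ ∫ _, exp (l ^ 2 * σ ^ 2 / 2) ∂ν :=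
        integral_mono (hint l).integral_prod_left (integrable_const _) fun b => hg b l
  _ = exp (l ^ 2 * σ ^ 2 / 2) := by simp

lemma map_prodMk_absolutelyContinuous_prod {Ω α β : Type*} [MeasurableSpace Ω]
    [MeasurableSpace α] [MeasurableSpace β] [Countable α] [Countable β]
    [MeasurableSingletonClass α] [MeasurableSingletonClass β] {μ : Measure Ω}
    {X : Ω → α} {Y : Ω → β} (hX : Measurable X) (hY : Measurable Y) :
    μ.map (fun ω => (X ω, Y ω)) ≪ (μ.map X).prod (μ.map Y) := by
  refine Measure.AbsolutelyContinuous.mk fun s _ hs => ?_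
  rw [← Set.biUnion_of_singleton s, measure_biUnion_null_iff (Set.to_countable s)] at hs ⊢
  rintro ⟨a, b⟩ hab
  have hprod := hs (a, b) hab
  rw [← Set.singleton_prod_singleton, Measure.prod_prod, mul_eq_zero,
    Measure.map_apply hX (measurableSet_singleton a),
    Measure.map_apply hY (measurableSet_singleton b)] at hprod
  rw [Measure.map_apply (hX.prodMk hY) (measurableSet_singleton _)]
  rcases hprod with h | h
  · exact measure_mono_null (fun ω hω => congrArg Prod.fst hω) h
  · exact measure_mono_null (fun ω hω => congrArg Prod.snd hω) h

lemma log_one_div_two_mul_pos {ε : ℝ} (hε : ε ∈ Set.Ioo 0 (1 / 2)) : 0 < log (1 / (2 * ε)) :=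
  log_pos (by rw [lt_div_iff₀ (by linarith [hε.1])]; linarith [hε.2])

lemma integral_exp_mul_indicator_sub {Ω : Type*} [MeasurableSpace Ω] {μ : Measure Ω}
    [IsProbabilityMeasure μ] {B : Set Ω} (hB : MeasurableSet B) (l : ℝ) :
    ∫ ω, exp (l * (B.indicator 1 ω - μ.real B)) ∂μ =
      exp (-(l * μ.real B)) * (1 - μ.real B + μ.real B * exp l) := by
  have hpt : (fun ω => exp (l * (B.indicator 1 ω - μ.real B))) = fun ω =>
      B.indicator (fun _ => exp (l + -(l * μ.real B)) - exp (-(l * μ.real B))) ω +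
        exp (-(l * μ.real B)) := by
    funext ω
    by_cases h : ω ∈ B <;> simp [h]; ring_nf
  rw [hpt, integral_add ((integrable_const _).indicator hB) (integrable_const _),
    integral_indicator_const _ hB, integral_const, probReal_univ, one_smul, smul_eq_mul, exp_add]
  ring

lemma isSubGaussian_indicator_sub {Ω : Type*} [MeasurableSpace Ω] {μ : Measure Ω}
    [IsProbabilityMeasure μ] {B : Set Ω} (hB : MeasurableSet B) {ε : ℝ} (hBε : μ.real B = ε)
    (hε : ε ∈ Set.Ioo 0 (1 / 2)) :
    IsSubGaussian μ (fun ω => B.indicator 1 ω - ε) √(1 / (2 * log (1 / (2 * ε)))) := by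
  have hL := log_one_div_two_mul_pos hε
  obtain ⟨hε0, hε2⟩ := hε
  intro l
  rw [Real.sq_sqrt (by positivity)]
  rcases le_total (log (1 / (2 * ε))) 2 with hL2 | hL2
  · have hoeffding := (hasSubgaussianMGF_of_mem_Icc (μ := μ) (X := B.indicator 1) (a := 0) (b := 1)
      (measurable_const.indicator hB).aemeasurable
      (ae_of_all _ fun ω => by by_cases h : ω ∈ B <;> simp [h])).mgf_le l
    rw [integral_indicator_one hB, hBε] at hoeffding
    refine hoeffding.trans (exp_le_exp.2 ?_)
    have hquarter : (((‖(1 : ℝ) - 0‖₊ / 2) ^ 2 : ℝ≥0) : ℝ) = 1 / 4 := by norm_num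
    have hσ : 1 / 4 ≤ 1 / (2 * log (1 / (2 * ε))) := by
      rw [div_le_div_iff₀ (by norm_num) (by positivity)]; linarith
    rw [hquarter]
    nlinarith [sq_nonneg l]
  · subst hBε
    rw [integral_exp_mul_indicator_sub hB l]
    calc exp (-(l * μ.real B)) * (1 - μ.real B + μ.real B * exp l)
        ≤ exp (-(l * μ.real B)) * exp (l * μ.real B + l ^ 2 / (4 * log (1 / (2 * μ.real B)))) :=
          mul_le_mul_of_nonneg_left (one_sub_add_mul_exp_le hε0 hL2 l) (exp_pos _).le
      _ = _ := by rw [← exp_add]; congr 1; field_simp; ring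

lemma measureReal_lt_of_map_eq_uniform {Ω : Type*} [MeasurableSpace Ω] {μ : Measure Ω}
    {X : Ω → ℝ} (hX : Measurable X) (hunif : μ.map X = volume.restrict (Set.Icc 0 1)) {ε : ℝ}
    (h0 : 0 ≤ ε) (h1 : ε ≤ 1) : μ.real {ω | X ω < ε} = ε := by
  have hIco : Set.Iio ε ∩ Set.Icc 0 1 = Set.Ico 0 ε := by
    ext x
    simp only [Set.mem_inter_iff, Set.mem_Iio, Set.mem_Icc, Set.mem_Ico]
    constructor
    · rintro ⟨hxε, hx0, -⟩; exact ⟨hx0, hxε⟩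
    · rintro ⟨hx0, hxε⟩; exact ⟨hxε, hx0, by linarith⟩
  change μ.real (X ⁻¹' Set.Iio ε) = ε
  rw [← map_measureReal_apply hX measurableSet_Iio, hunif,
    measureReal_restrict_apply measurableSet_Iio, hIco, volume_real_Ico_of_le h0, sub_zero]

section
variable {Ω ι : Type*} [MeasurableSpace Ω] [MeasurableSpace ι] [MeasurableSingletonClass ι]
  [Finite ι] {μ : Measure Ω} {T : Ω → ι} {Z : Ω → ι → Bool}

lemma integral_indicator_eval_map_prodMk (hT : Measurable T) (hZ : Measurable Z) :
    ∫ x, {x : ι × (ι → Bool) | x.2 x.1}.indicator 1 x ∂(μ.map fun ω => (T ω, Z ω)) =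
      μ.real {ω | Z ω (T ω)} := by
  rw [integral_indicator_one (Set.to_countable _).measurableSet,
    map_measureReal_apply (hT.prodMk hZ) (Set.to_countable _).measurableSet]
  rfl

variable [IsProbabilityMeasure μ]

lemma isSubGaussian_indicator_eval_prod_map (hT : Measurable T) (hZ : Measurable Z)
    {ε : ℝ} (hε : ε ∈ Set.Ioo 0 (1 / 2)) (hZε : ∀ i, μ.real {ω | Z ω i} = ε) :
    IsSubGaussian ((μ.map T).prod (μ.map Z))
      (fun x => {x : ι × (ι → Bool) | x.2 x.1}.indicator 1 x - ε)
      √(1 / (2 * log (1 / (2 * ε)))) := by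
  have : IsProbabilityMeasure (μ.map T) := Measure.isProbabilityMeasure_map hT.aemeasurable
  refine isSubGaussian_prod (fun _ => .of_finite) fun i => ?_
  rw [isSubGaussian_map_iff hZ.aemeasurable (measurable_of_countable _)]
  have hZi : MeasurableSet {ω | Z ω i} :=
    (measurable_pi_apply i).comp hZ (measurableSet_singleton _)
  convert isSubGaussian_indicator_sub hZi (hZε i) hε using 3 with ω
  simp [Set.indicator_apply]

lemma integral_indicator_eval_prod_map (hT : Measurable T) (hZ : Measurable Z)
    {ε : ℝ} (hZε : ∀ i, μ.real {ω | Z ω i} = ε) :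
    ∫ x, {x : ι × (ι → Bool) | x.2 x.1}.indicator 1 x ∂((μ.map T).prod (μ.map Z)) = ε := by
  have : IsProbabilityMeasure (μ.map T) := Measure.isProbabilityMeasure_map hT.aemeasurable
  rw [integral_prod _ .of_finite]
  have hslice (i : ι) : ∫ z, {x : ι × (ι → Bool) | x.2 x.1}.indicator 1 (i, z) ∂(μ.map Z) = ε := by
    have hZi : MeasurableSet {ω | Z ω i} :=
      (measurable_pi_apply i).comp hZ (measurableSet_singleton _)
    rw [integral_map hZ.aemeasurable (measurable_of_countable _).aestronglyMeasurable, ← hZε i,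
      ← integral_indicator_one hZi]
    congr with ω
  simp [hslice]

lemma measureReal_eval_le_add_sqrt_mutualInfo (hT : Measurable T) (hZ : Measurable Z)
    {ε : ℝ} (hε : ε ∈ Set.Ioo 0 (1 / 2)) (hZε : ∀ i, μ.real {ω | Z ω i} = ε) :
    μ.real {ω | Z ω (T ω)} ≤ ε + √(mutualInfo μ T Z / log (1 / (2 * ε))) := by
  have : IsProbabilityMeasure (μ.map T) := Measure.isProbabilityMeasure_map hT.aemeasurable
  have : IsProbabilityMeasure (μ.map Z) := Measure.isProbabilityMeasure_map hZ.aemeasurable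
  have : IsProbabilityMeasure (μ.map fun ω => (T ω, Z ω)) :=
    Measure.isProbabilityMeasure_map (hT.prodMk hZ).aemeasurable
  have hbias := integral_sub_integral_le_sqrt_integral_llr
    (map_prodMk_absolutelyContinuous_prod hT hZ) .of_finite .of_finite (fun _ => .of_finite)
    (by rw [integral_indicator_eval_prod_map hT hZ hZε]
        exact isSubGaussian_indicator_eval_prod_map hT hZ hε hZε)
  have hσ : 2 * √(1 / (2 * log (1 / (2 * ε)))) ^ 2 = 1 / log (1 / (2 * ε)) := by
    rw [Real.sq_sqrt (by have := log_one_div_two_mul_pos hε; positivity)]; ring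
  rw [integral_indicator_eval_map_prodMk hT hZ, integral_indicator_eval_prod_map hT hZ hZε, hσ,
    one_div_mul_eq_div] at hbias
  unfold mutualInfo klDivReal
  linarith

end

theorem prob_small_pvalue_le
    {Ω : Type*} [MeasurableSpace Ω] (μ : Measure Ω) [IsProbabilityMeasure μ]
    {m : ℕ} (T : Ω → Fin m) (φ : Ω → Fin m → ℝ) (ε : ℝ)
    (hε : ε ∈ Set.Ioo (0 : ℝ) (1 / 2))
    (hT : Measurable T) (hφ : Measurable φ)
    (hunif : ∀ i, μ.map (fun ω => φ ω i) = volume.restrict (Set.Icc (0 : ℝ) 1)) :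
    (μ {ω | φ ω (T ω) < ε}).toReal ≤
      ε + Real.sqrt
        ((mutualInfo μ T fun ω => fun i => decide (φ ω i < ε)) / Real.log (1 / (2 * ε))) := by
  have hφ_apply (i : Fin m) : Measurable fun ω => φ ω i := (measurable_pi_apply i).comp hφ
  have hZ : Measurable fun ω i => decide (φ ω i < ε) := measurable_pi_lambda _ fun i =>
    measurable_to_bool
      (by convert measurableSet_lt (hφ_apply i) (measurable_const (a := ε)); ext; simp)
  have hsmall (i : Fin m) : μ.real {ω | φ ω i < ε} = ε :=
    measureReal_lt_of_map_eq_uniform (hφ_apply i) (hunif i) hε.1.le (by linarith [hε.2])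
  simpa [measureReal_def] using
    measureReal_eval_le_add_sqrt_mutualInfo hT hZ hε (by simpa using hsmall)
end
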